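/- arXiv:1903.05410 — 5 statements merged into one kernel-verified Lean document; each statement's English description precedes it below -/
import Mathlib

section
/- For a positive integer k, the number 6k-1 is composite with all prime factors greater than 3 if and only if k can be written as k = (6x-1)y + x for some positive integers x, y. -/
/-!
An integer prime to 6 is `≡ ±1 (mod 6)`, and a product of two of them is `≡ -1` exactly when the
factors are `6x - 1` and `6y + 1`. The identity `(6x - 1)(6y + 1) + 1 = 6((6x - 1)y + x)` then
matches the factorisations of `6k - 1` with the representations of `k`.
-/

namespace SixKMinusOne

theorem mul_add_one_eq (x y : ℕ) (hx : 0 < x) :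
    (6 * x - 1) * (6 * y + 1) + 1 = 6 * ((6 * x - 1) * y + x) := by
  obtain ⟨x, rfl⟩ := Nat.exists_eq_add_of_lt hx
  rw [show 6 * (0 + x + 1) - 1 = 6 * x + 5 by omega]
  ring

theorem mod_six_eq_one_or_five {a : ℕ} (h2 : ¬ 2 ∣ a) (h3 : ¬ 3 ∣ a) :
    a % 6 = 1 ∨ a % 6 = 5 := by
  omega

theorem mod_six_of_mul_mod_six_eq_five {a b : ℕ} (ha : a % 6 = 1 ∨ a % 6 = 5)
    (hb : b % 6 = 1 ∨ b % 6 = 5) (hab : a * b % 6 = 5) :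
    a % 6 = 5 ∧ b % 6 = 1 ∨ a % 6 = 1 ∧ b % 6 = 5 := by
  rw [Nat.mul_mod] at hab
  rcases ha with ha | ha <;> rcases hb with hb | hb <;> simp_all

theorem exists_eq_of_mul_add_one_eq {a b k : ℕ} (ha : a % 6 = 5) (hb : b % 6 = 1) (hb1 : 1 < b)
    (hab : a * b + 1 = 6 * k) : ∃ x y : ℕ, 0 < x ∧ 0 < y ∧ k = (6 * x - 1) * y + x := by
  refine ⟨(a + 1) / 6, b / 6, by omega, by omega, ?_⟩
  have key := mul_add_one_eq ((a + 1) / 6) (b / 6) (by omega)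
  have ha' : 6 * ((a + 1) / 6) - 1 = a := by omega
  rw [ha', show 6 * (b / 6) + 1 = b by omega] at key
  rw [ha']
  omega

end SixKMinusOne

open SixKMinusOne in
theorem stmt_5_general (k : ℕ) :
    (∃ a b : ℕ, 1 < a ∧ 1 < b ∧ ¬ 2 ∣ a ∧ ¬ 3 ∣ a ∧ ¬ 2 ∣ b ∧ ¬ 3 ∣ b ∧
      6 * k - 1 = a * b) ↔
    (∃ x y : ℕ, 0 < x ∧ 0 < y ∧ k = (6 * x - 1) * y + x) := by
  constructor
  · rintro ⟨a, b, ha1, hb1, ha2, ha3, hb2, hb3, hab⟩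
    have hpos : 0 < a * b := Nat.mul_pos (by omega) (by omega)
    have hk : a * b + 1 = 6 * k := by omega
    rcases mod_six_of_mul_mod_six_eq_five (mod_six_eq_one_or_five ha2 ha3)
      (mod_six_eq_one_or_five hb2 hb3) (by omega) with ⟨ha, hb⟩ | ⟨ha, hb⟩
    · exact exists_eq_of_mul_add_one_eq ha hb hb1 hk
    · exact exists_eq_of_mul_add_one_eq hb ha ha1 (by rwa [mul_comm])
  · rintro ⟨x, y, hx, hy, rfl⟩
    have key := mul_add_one_eq x y hx
    exact ⟨6 * x - 1, 6 * y + 1, by omega, by omega, by omega, by omega, by omega, by omega,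
      by omega⟩

theorem stmt_5 (k : ℕ) (hk : 0 < k) :
    (∃ a b : ℕ, 1 < a ∧ 1 < b ∧ ¬ 2 ∣ a ∧ ¬ 3 ∣ a ∧ ¬ 2 ∣ b ∧ ¬ 3 ∣ b ∧
      6 * k - 1 = a * b) ↔
    (∃ x y : ℕ, 0 < x ∧ 0 < y ∧ k = (6 * x - 1) * y + x) :=
  stmt_5_general k
end

section
/- For a positive integer k, the number 6k-1 is composite if and only if k can be written as k = (6x+1)y - x for some positive integers x, y. -/
/-!
Every divisor of a number `≡ 5 (mod 6)` is prime to 6, and a product of two residues in `{1, 5}`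
is `5` only for the pair `{1, 5}`. So a nontrivial factorization of `6k - 1` has the shape
`(6x + 1)(6y - 1)` with `x, y ≥ 1`, and the identity `(6x + 1)(6y - 1) = 6((6x + 1)y - x) - 1`
converts between the two descriptions of `k`.
-/

theorem Nat.mod_six_of_mul_mod_six_eq_five {a b : ℕ} (h : a * b % 6 = 5) :
    a % 6 = 1 ∧ b % 6 = 5 ∨ a % 6 = 5 ∧ b % 6 = 1 := by
  rw [Nat.mul_mod] at h
  have ha := Nat.mod_lt a (by norm_num : 6 > 0)
  have hb := Nat.mod_lt b (by norm_num : 6 > 0)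
  interval_cases a % 6 <;> interval_cases b % 6 <;> omega

theorem six_mul_sub_one_eq_mul_iff (k x y : ℕ) (hy : 0 < y) :
    6 * k - 1 = (6 * x + 1) * (6 * y - 1) ↔ k = (6 * x + 1) * y - x := by
  obtain ⟨z, rfl⟩ : ∃ z, y = z + 1 := ⟨y - 1, by omega⟩
  have expand_left : (6 * x + 1) * (6 * (z + 1) - 1) = 36 * (x * z) + 30 * x + 6 * z + 5 := by
    rw [show 6 * (z + 1) - 1 = 6 * z + 5 by omega]; ring
  have expand_right : (6 * x + 1) * (z + 1) = 6 * (x * z) + 6 * x + z + 1 := by ring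
  rw [expand_left, expand_right]
  omega

theorem exists_of_six_mul_sub_one_eq_mul {k a b : ℕ} (ha : 1 < a) (ha1 : a % 6 = 1)
    (hb5 : b % 6 = 5) (h : 6 * k - 1 = a * b) :
    ∃ x y : ℕ, 0 < x ∧ 0 < y ∧ k = (6 * x + 1) * y - x := by
  refine ⟨a / 6, b / 6 + 1, by omega, by omega, ?_⟩
  rw [← six_mul_sub_one_eq_mul_iff _ _ _ (by omega)]
  convert h using 2 <;> omega

theorem stmt_6_general (k : ℕ) :
    (∃ a b : ℕ, 1 < a ∧ 1 < b ∧ 6 * k - 1 = a * b) ↔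
    (∃ x y : ℕ, 0 < x ∧ 0 < y ∧ k = (6 * x + 1) * y - x) := by
  constructor
  · rintro ⟨a, b, ha, hb, h⟩
    have hab : 2 * 2 ≤ a * b := Nat.mul_le_mul ha hb
    have hmod : a * b % 6 = 5 := by omega
    rcases Nat.mod_six_of_mul_mod_six_eq_five hmod with ⟨ha1, hb5⟩ | ⟨ha5, hb1⟩
    · exact exists_of_six_mul_sub_one_eq_mul ha ha1 hb5 h
    · exact exists_of_six_mul_sub_one_eq_mul hb hb1 ha5 (h.trans (mul_comm a b))
  · rintro ⟨x, y, hx, hy, rfl⟩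
    exact ⟨6 * x + 1, 6 * y - 1, by omega, by omega,
      (six_mul_sub_one_eq_mul_iff _ x y hy).mpr rfl⟩

theorem stmt_6 (k : ℕ) (hk : 0 < k) :
    (∃ a b : ℕ, 1 < a ∧ 1 < b ∧ 6 * k - 1 = a * b) ↔
    (∃ x y : ℕ, 0 < x ∧ 0 < y ∧ k = (6 * x + 1) * y - x) :=
  stmt_6_general k
end

section
/- For a positive integer k, the number 6k+1 is composite if and only if k = (6x+1)y + x or k = (6x-1)y - x for some positive integers x, y. -/
/-!
A factorisation `6k + 1 = a * b` has `a * b ≡ 1 (mod 6)`, so `a ≡ b ≡ 1` or `a ≡ b ≡ -1 (mod 6)`.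
Writing `a = 6x ± 1`, `b = 6y ± 1` and expanding gives `k = (6x + 1) y + x` or `k = (6x - 1) y - x`,
and these identities read backwards give the converse.
-/

theorem six_mul_add_one_mul_six_mul_add_one (x y : ℕ) :
    (6 * x + 1) * (6 * y + 1) = 6 * ((6 * x + 1) * y + x) + 1 := by
  ring

theorem six_mul_sub_one_mul_six_mul_sub_one {x y : ℕ} (hx : 0 < x) (hy : 0 < y) :
    (6 * x - 1) * (6 * y - 1) = 6 * ((6 * x - 1) * y - x) + 1 := by
  have h₁ : 1 ≤ 6 * x := by omega
  have h₂ : 1 ≤ 6 * y := by omega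
  have h₃ : x ≤ (6 * x - 1) * y := le_trans (by omega) (Nat.le_mul_of_pos_right _ hy)
  zify [h₁, h₂, h₃]
  ring

theorem mod_six_eq_of_mul_mod_six_eq_one {a b : ℕ} (h : a * b % 6 = 1) :
    (a % 6 = 1 ∧ b % 6 = 1) ∨ (a % 6 = 5 ∧ b % 6 = 5) := by
  rw [Nat.mul_mod] at h
  have ha := Nat.mod_lt a (by norm_num : 6 > 0)
  have hb := Nat.mod_lt b (by norm_num : 6 > 0)
  interval_cases a % 6 <;> interval_cases b % 6 <;> simp_all

theorem exists_of_six_mul_add_one_eq_mul {k a b : ℕ} (ha : 1 < a) (hb : 1 < b)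
    (h : 6 * k + 1 = a * b) :
    ∃ x y : ℕ, 0 < x ∧ 0 < y ∧ (k = (6 * x + 1) * y + x ∨ k = (6 * x - 1) * y - x) := by
  rcases mod_six_eq_of_mul_mod_six_eq_one (a := a) (b := b) (by omega) with
    ⟨ha₆, hb₆⟩ | ⟨ha₆, hb₆⟩
  · obtain ⟨x, rfl⟩ : ∃ x, a = 6 * x + 1 := ⟨a / 6, by omega⟩
    obtain ⟨y, rfl⟩ : ∃ y, b = 6 * y + 1 := ⟨b / 6, by omega⟩
    rw [six_mul_add_one_mul_six_mul_add_one] at h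
    exact ⟨x, y, by omega, by omega, Or.inl (by omega)⟩
  · obtain ⟨x, rfl⟩ : ∃ x, a = 6 * x - 1 := ⟨a / 6 + 1, by omega⟩
    obtain ⟨y, rfl⟩ : ∃ y, b = 6 * y - 1 := ⟨b / 6 + 1, by omega⟩
    have hx : 0 < x := by omega
    have hy : 0 < y := by omega
    rw [six_mul_sub_one_mul_six_mul_sub_one hx hy] at h
    exact ⟨x, y, hx, hy, Or.inr (by omega)⟩

theorem stmt_7_general (k : ℕ) :
    (∃ a b : ℕ, 1 < a ∧ 1 < b ∧ 6 * k + 1 = a * b) ↔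
    (∃ x y : ℕ, 0 < x ∧ 0 < y ∧
      (k = (6 * x + 1) * y + x ∨ k = (6 * x - 1) * y - x)) := by
  constructor
  · rintro ⟨a, b, ha, hb, hab⟩
    exact exists_of_six_mul_add_one_eq_mul ha hb hab
  · rintro ⟨x, y, hx, hy, rfl | rfl⟩
    · exact ⟨6 * x + 1, 6 * y + 1, by omega, by omega,
        (six_mul_add_one_mul_six_mul_add_one x y).symm⟩
    · exact ⟨6 * x - 1, 6 * y - 1, by omega, by omega,
        (six_mul_sub_one_mul_six_mul_sub_one hx hy).symm⟩

theorem stmt_7 (k : ℕ) (hk : 0 < k) :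
    (∃ a b : ℕ, 1 < a ∧ 1 < b ∧ 6 * k + 1 = a * b) ↔
    (∃ x y : ℕ, 0 < x ∧ 0 < y ∧
      (k = (6 * x + 1) * y + x ∨ k = (6 * x - 1) * y - x)) :=
  stmt_7_general k
end

section
/- For a positive integer k, the pair (6k-1, 6k+1) is a twin prime pair if and only if k cannot be written in any of the forms (6x-1)y + x, (6x-1)y - x, or (6x+1)y + x with x, y positive integers. -/
/-!
Every divisor of a number prime to 6 is again prime to 6, hence of the form `6x ± 1`. So
`6k - 1` is composite exactly when it factors as `(6x - 1)(6y + 1)`, and `6k + 1` exactly when it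
factors as `(6x - 1)(6y - 1)` or `(6x + 1)(6y + 1)` (with `x, y ≥ 1`). Writing these products as
`6m - 1`, resp. `6m + 1`, the three factorizations correspond exactly to `k = m` for the three forms.
-/

theorem six_mul_sub_one_mul_six_mul_add_one {x : ℕ} (hx : 0 < x) (y : ℕ) :
    (6 * x - 1) * (6 * y + 1) = 6 * ((6 * x - 1) * y + x) - 1 := by
  zify [show 1 ≤ 6 * x by omega, show 1 ≤ 6 * ((6 * x - 1) * y + x) by omega]
  ring

theorem exists_eq_six_mul_sub_one_or_add_one {d : ℕ} (h2 : ¬ 2 ∣ d) (h3 : ¬ 3 ∣ d) (h1 : d ≠ 1) :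
    ∃ x, 0 < x ∧ (d = 6 * x - 1 ∨ d = 6 * x + 1) := by
  have hd : d % 6 = 1 ∨ d % 6 = 5 := by omega
  refine ⟨(d + 1) / 6, ?_, ?_⟩ <;> omega

theorem exists_eq_mul_six_mul_pm_one_of_not_prime {n : ℕ} (h2 : ¬ 2 ∣ n) (h3 : ¬ 3 ∣ n)
    (h1 : n ≠ 1) (hn : ¬ n.Prime) :
    ∃ x y, 0 < x ∧ 0 < y ∧ (n = (6 * x - 1) * (6 * y - 1) ∨ n = (6 * x - 1) * (6 * y + 1) ∨
      n = (6 * x + 1) * (6 * y + 1)) := by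
  obtain ⟨a, b, ha, hb, rfl⟩ := (Nat.not_prime_iff_exists_mul_eq (by omega)).1 hn
  have ha1 : a ≠ 1 := by rintro rfl; omega
  have hb1 : b ≠ 1 := by rintro rfl; omega
  obtain ⟨x, hx, rfl | rfl⟩ := exists_eq_six_mul_sub_one_or_add_one
    (fun h ↦ h2 (h.mul_right b)) (fun h ↦ h3 (h.mul_right b)) ha1 <;>
  obtain ⟨y, hy, rfl | rfl⟩ := exists_eq_six_mul_sub_one_or_add_one
    (fun h ↦ h2 (h.mul_left _)) (fun h ↦ h3 (h.mul_left _)) hb1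
  · exact ⟨x, y, hx, hy, .inl rfl⟩
  · exact ⟨x, y, hx, hy, .inr (.inl rfl)⟩
  · exact ⟨y, x, hy, hx, .inr (.inl (mul_comm _ _))⟩
  · exact ⟨x, y, hx, hy, .inr (.inr rfl)⟩

theorem prime_six_mul_sub_one_iff {k : ℕ} (hk : 0 < k) :
    (6 * k - 1).Prime ↔ ¬ ∃ x y, 0 < x ∧ 0 < y ∧ k = (6 * x - 1) * y + x := by
  constructor
  · rintro hp ⟨x, y, hx, hy, rfl⟩
    rw [← six_mul_sub_one_mul_six_mul_add_one hx] at hp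
    exact Nat.not_prime_mul (by omega) (by omega) hp
  · refine fun hk' ↦ by_contra fun hp ↦ ?_
    obtain ⟨x, y, hx, hy, h | h | h⟩ :=
      exists_eq_mul_six_mul_pm_one_of_not_prime (by omega) (by omega) (by omega) hp
    · rw [six_mul_sub_one_mul_six_mul_sub_one hx hy] at h
      omega
    · rw [six_mul_sub_one_mul_six_mul_add_one hx] at h
      exact hk' ⟨x, y, hx, hy, by omega⟩
    · rw [six_mul_add_one_mul_six_mul_add_one] at h
      omega

theorem prime_six_mul_add_one_iff {k : ℕ} (hk : 0 < k) :
    (6 * k + 1).Prime ↔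
      ¬ ∃ x y, 0 < x ∧ 0 < y ∧ (k = (6 * x - 1) * y - x ∨ k = (6 * x + 1) * y + x) := by
  constructor
  · rintro hp ⟨x, y, hx, hy, h | h⟩
    · rw [show 6 * k + 1 = (6 * x - 1) * (6 * y - 1) by
        rw [six_mul_sub_one_mul_six_mul_sub_one hx hy, h]] at hp
      exact Nat.not_prime_mul (by omega) (by omega) hp
    · rw [h, ← six_mul_add_one_mul_six_mul_add_one] at hp
      exact Nat.not_prime_mul (by omega) (by omega) hp
  · refine fun hk' ↦ by_contra fun hp ↦ ?_
    obtain ⟨x, y, hx, hy, h | h | h⟩ :=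
      exists_eq_mul_six_mul_pm_one_of_not_prime (by omega) (by omega) (by omega) hp
    · rw [six_mul_sub_one_mul_six_mul_sub_one hx hy] at h
      exact hk' ⟨x, y, hx, hy, .inl (by omega)⟩
    · rw [six_mul_sub_one_mul_six_mul_add_one hx] at h
      omega
    · rw [six_mul_add_one_mul_six_mul_add_one] at h
      exact hk' ⟨x, y, hx, hy, .inr (by omega)⟩

theorem stmt_9 (k : ℕ) (hk : 0 < k) :
    (Nat.Prime (6 * k - 1) ∧ Nat.Prime (6 * k + 1)) ↔
    ¬ ∃ x y : ℕ, 0 < x ∧ 0 < y ∧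
      (k = (6 * x - 1) * y + x ∨ k = (6 * x - 1) * y - x ∨
       k = (6 * x + 1) * y + x) := by
  rw [prime_six_mul_sub_one_iff hk, prime_six_mul_add_one_iff hk, ← not_or]
  simp only [and_or_left, exists_or]
end

section
/- For a positive integer k, both 6k+1 and 6k+5 are prime (a cousin prime pair) only if k cannot be written in any of the forms (6x-1)y + x - 1, (6x-1)y - x, or (6x+1)y + x with x, y positive integers. -/
/-! Each of the three forms of `k` factors `6k+1` or `6k+5` as a product of two numbers `6m ± 1`
with `m ≥ 1`, so that number is not prime. -/

theorem six_mul_add_five_eq_of_eq_sub_one {k x y : ℕ} (hx : 0 < x)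
    (hk : k = (6 * x - 1) * y + x - 1) : 6 * k + 5 = (6 * x - 1) * (6 * y + 1) := by
  have h₁ : 1 ≤ 6 * x := by omega
  have h₂ : 1 ≤ (6 * x - 1) * y + x := by omega
  zify [h₁, h₂] at hk ⊢
  linear_combination 6 * hk

theorem six_mul_add_one_eq_of_eq_sub {k x y : ℕ} (hx : 0 < x) (hy : 0 < y)
    (hk : k = (6 * x - 1) * y - x) : 6 * k + 1 = (6 * x - 1) * (6 * y - 1) := by
  have h₁ : 1 ≤ 6 * x := by omega
  have h₂ : x ≤ (6 * x - 1) * y := le_trans (by omega) (Nat.le_mul_of_pos_right _ hy)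
  have h₃ : 1 ≤ 6 * y := by omega
  zify [h₁, h₂, h₃] at hk ⊢
  linear_combination 6 * hk

theorem six_mul_add_one_eq_of_eq_add {k x y : ℕ} (hk : k = (6 * x + 1) * y + x) :
    6 * k + 1 = (6 * x + 1) * (6 * y + 1) := by
  subst hk
  ring

theorem stmt_15_general (k : ℕ)
    (h : Nat.Prime (6 * k + 1) ∧ Nat.Prime (6 * k + 5)) :
    ¬ ∃ x y : ℕ, 0 < x ∧ 0 < y ∧
      (k = (6 * x - 1) * y + x - 1 ∨ k = (6 * x - 1) * y - x ∨
       k = (6 * x + 1) * y + x) := by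
  obtain ⟨hp₁, hp₅⟩ := h
  rintro ⟨x, y, hx, hy, hk | hk | hk⟩
  · exact Nat.not_prime_of_mul_eq (six_mul_add_five_eq_of_eq_sub_one hx hk).symm
      (by omega) (by omega) hp₅
  · exact Nat.not_prime_of_mul_eq (six_mul_add_one_eq_of_eq_sub hx hy hk).symm
      (by omega) (by omega) hp₁
  · exact Nat.not_prime_of_mul_eq (six_mul_add_one_eq_of_eq_add hk).symm
      (by omega) (by omega) hp₁

theorem stmt_15 (k : ℕ) (hk : 0 < k)
    (h : Nat.Prime (6 * k + 1) ∧ Nat.Prime (6 * k + 5)) :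
    ¬ ∃ x y : ℕ, 0 < x ∧ 0 < y ∧
      (k = (6 * x - 1) * y + x - 1 ∨ k = (6 * x - 1) * y - x ∨
       k = (6 * x + 1) * y + x) :=
  stmt_15_general k h
end
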